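/- arXiv:1909.00251 — 3 statements merged into one kernel-verified Lean document; each statement's English description precedes it below -/
import Mathlib

section
/- Let n ≥ 1 be a real number, u > 0 a real number, and (p_z, p_v) ∈ ℂ×ℝ. Then there exist z ∈ ℂ and v ∈ ℝ such that (|z−p_z|² + u)² + (v − p_v + 2·Im(z·conj(p_z)))² = 4/n if and only if u ≤ 2/√n. In other words, the horosphere of height u meets the extended Cygan sphere of radius (4/n)^{1/4} centered at the boundary point (p_z,p_v) precisely when u ≤ 2/√n. -/
theorem horosphere_meets_extended_cygan_sphere_iff (n : ℝ) (hn : 1 ≤ n)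
    (u : ℝ) (hu : 0 < u) (pz : ℂ) (pv : ℝ) :
    (∃ (z : ℂ) (v : ℝ),
        (‖z - pz‖ ^ 2 + u) ^ 2
          + (v - pv + 2 * (z * (starRingEnd ℂ) pz).im) ^ 2 = 4 / n)
      ↔ u ≤ 2 / Real.sqrt n := by
  have hn0 : 0 < n := lt_of_lt_of_le one_pos hn
  have hs : 0 < Real.sqrt n := Real.sqrt_pos.mpr hn0
  have hsq : Real.sqrt n ^ 2 = n := Real.sq_sqrt hn0.le
  constructor
  · rintro ⟨z, v, h⟩
    have h1 : u ^ 2 ≤ 4 / n := by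
      nlinarith [sq_nonneg (v - pv + 2 * (z * (starRingEnd ℂ) pz).im),
        sq_nonneg ‖z - pz‖, sq_nonneg (‖z - pz‖ ^ 2 + u),
        sq_nonneg (‖z - pz‖ ^ 2)]
    have h2 : u ^ 2 ≤ (2 / Real.sqrt n) ^ 2 := by
      rw [div_pow, hsq]; norm_num; linarith
    have h1' : u ^ 2 * n ≤ 4 := by
      rw [← le_div_iff₀ hn0]; exact h1
    rw [le_div_iff₀ hs]
    nlinarith [sq_nonneg (u * Real.sqrt n - 2), hsq, mul_pos hu hs]
  · intro h
    refine ⟨pz, pv + Real.sqrt (4 / n - u ^ 2), ?_⟩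
    have him : (pz * (starRingEnd ℂ) pz).im = 0 := by
      simp [Complex.mul_im, Complex.conj_re, Complex.conj_im]; ring
    have hle : u ^ 2 ≤ 4 / n := by
      have h2 : u ^ 2 ≤ (2 / Real.sqrt n) ^ 2 := by
        apply sq_le_sq' (by linarith) h
      rwa [div_pow, hsq, show (2:ℝ)^2 = 4 by norm_num] at h2
    have hsqrt : Real.sqrt (4 / n - u ^ 2) ^ 2 = 4 / n - u ^ 2 :=
      Real.sq_sqrt (by linarith)
    simp [him]
    nlinarith [hsqrt]
end

section
/- Let T₂ = [[1,−2,−2],[0,1,2],[0,0,1]], T_{i√2} = [[1,i√2,−1],[0,1,i√2],[0,0,1]], T_{2√2} = [[1,0,i√2],[0,1,0],[0,0,1]], and R = diag(1,−1,1), viewed as elements of GL(3,ℂ). Then every element γ of the subgroup of GL(3,ℂ) generated by {T₂, T_{i√2}, T_{2√2}, R} can be written as γ = R^p · T_{2√2}^n · T₂^m · T_{i√2}^l for some integers m, n, l and some p ∈ {0,1}. -/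
/-!
Writing the generators as `R`, `Z = T_{2√2}`, `A = T₂`, `B = T_{i√2}`, the only facts needed
are the relations `R² = 1`, `R A R⁻¹ = A⁻¹`, `R B R⁻¹ = B⁻¹`, `Z` central, and
`B A B⁻¹ A⁻¹ = Z⁴`; all of them are read off from the Heisenberg group law
`(x, y, w) · (x', y', w') = (x + x', y + y', w + w' + x y')` of upper unitriangular matrices.
Under these relations the set of words `R ^ p Z ^ n A ^ m B ^ l` with `p ∈ {0, 1}` is stable
under left multiplication by every generator and its inverse: `R` flips the signs of the `A`-
and `B`-exponents it passes, and moving `B ^ i` past `A ^ m` produces the central factor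
`Z ^ (4 i m)`.
-/

open Matrix

section NormalForm

variable {G : Type*} [Group G]

theorem mul_eq_inv_mul_mul_of_mul_eq {x y d : G} (h : x * y = d * y * x) :
    y * x = d⁻¹ * x * y := by
  rw [mul_assoc d⁻¹, h]
  group

theorem mul_zpow_eq_of_mul_eq {x y d : G} (h : x * y = d * y * x) (hd : Commute d y) (m : ℤ) :
    x * y ^ m = d ^ m * y ^ m * x := by
  have := (show SemiconjBy x y (d * y) from h).zpow_right m
  rwa [hd.mul_zpow] at this

theorem zpow_mul_zpow_eq_of_mul_eq {a b c : G} (h : b * a = c * a * b) (hca : Commute c a)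
    (hcb : Commute c b) (i m : ℤ) : b ^ i * a ^ m = c ^ (i * m) * a ^ m * b ^ i := by
  have hm := mul_eq_inv_mul_mul_of_mul_eq (mul_zpow_eq_of_mul_eq h hca m)
  have hi := mul_eq_inv_mul_mul_of_mul_eq
    (mul_zpow_eq_of_mul_eq hm ((hcb.zpow_left m).inv_left) i)
  rw [hi]
  group

theorem zpow_mul_pow_eq_of_mul_eq_inv_mul {r a : G} (h : r * a = a⁻¹ * r) (j : ℤ) (p : ℕ) :
    a ^ j * r ^ p = r ^ p * a ^ ((-1) ^ p * j) := by
  have step : ∀ i : ℤ, a ^ i * r = r * a ^ (-i) := fun i => by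
    simpa using ((show SemiconjBy r a a⁻¹ from h).zpow_right (-i)).symm
  induction p with
  | zero => simp
  | succ p ih =>
    rw [pow_succ, ← mul_assoc, ih, mul_assoc, step, pow_succ, mul_assoc]
    congr 3
    ring

def normalForms (r z a b : G) : Set G :=
  {g | ∃ (m n l : ℤ) (p : ℕ), p ≤ 1 ∧ g = r ^ p * z ^ n * a ^ m * b ^ l}

variable {r z a b g : G}

theorem mul_mem_normalForms (hr : r * r = 1) (hg : g ∈ normalForms r z a b) :
    r * g ∈ normalForms r z a b := by
  obtain ⟨m, n, l, p, hp, rfl⟩ := hg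
  obtain rfl | rfl : p = 0 ∨ p = 1 := by omega
  · exact ⟨m, n, l, 1, le_rfl, by simp only [pow_zero, pow_one, one_mul, mul_assoc]⟩
  · exact ⟨m, n, l, 0, zero_le_one, by simp [← mul_assoc, hr]⟩

theorem zpow_mul_mem_normalForms_of_commute (hzr : Commute z r) (j : ℤ)
    (hg : g ∈ normalForms r z a b) : z ^ j * g ∈ normalForms r z a b := by
  obtain ⟨m, n, l, p, hp, rfl⟩ := hg
  refine ⟨m, j + n, l, p, hp, ?_⟩
  simp only [_root_.zpow_add, ← mul_assoc, ((hzr.zpow_left j).pow_right p).eq]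

theorem zpow_mul_mem_normalForms_of_inverts (hra : r * a = a⁻¹ * r) (hza : Commute z a) (j : ℤ)
    (hg : g ∈ normalForms r z a b) : a ^ j * g ∈ normalForms r z a b := by
  obtain ⟨m, n, l, p, hp, rfl⟩ := hg
  refine ⟨(-1) ^ p * j + m, n, l, p, hp, ?_⟩
  calc a ^ j * (r ^ p * z ^ n * a ^ m * b ^ l)
      = r ^ p * (a ^ ((-1) ^ p * j) * z ^ n) * a ^ m * b ^ l := by
        simp only [← mul_assoc, zpow_mul_pow_eq_of_mul_eq_inv_mul hra]
    _ = r ^ p * z ^ n * a ^ ((-1) ^ p * j + m) * b ^ l := by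
        rw [← (hza.zpow_zpow n _).eq, _root_.zpow_add]
        simp only [mul_assoc]

theorem zpow_mul_mem_normalForms_of_commutator {k : ℤ} (hrb : r * b = b⁻¹ * r)
    (hza : Commute z a) (hzb : Commute z b) (hab : b * a = z ^ k * a * b) (j : ℤ)
    (hg : g ∈ normalForms r z a b) : b ^ j * g ∈ normalForms r z a b := by
  obtain ⟨m, n, l, p, hp, rfl⟩ := hg
  set i := (-1) ^ p * j
  refine ⟨m, n + k * (i * m), i + l, p, hp, ?_⟩
  calc b ^ j * (r ^ p * z ^ n * a ^ m * b ^ l)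
      = r ^ p * (b ^ i * z ^ n) * a ^ m * b ^ l := by
        simp only [← mul_assoc, zpow_mul_pow_eq_of_mul_eq_inv_mul hrb, i]
    _ = r ^ p * z ^ n * (b ^ i * a ^ m) * b ^ l := by
        rw [← (hzb.zpow_zpow n i).eq]
        simp only [mul_assoc]
    _ = r ^ p * z ^ (n + k * (i * m)) * a ^ m * b ^ (i + l) := by
        rw [zpow_mul_zpow_eq_of_mul_eq hab (hza.zpow_left k) (hzb.zpow_left k), ← _root_.zpow_mul,
          _root_.zpow_add, _root_.zpow_add]
        simp only [mul_assoc]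

theorem closure_subset_normalForms {k : ℤ} (hr : r * r = 1) (hra : r * a = a⁻¹ * r)
    (hrb : r * b = b⁻¹ * r) (hzr : Commute z r) (hza : Commute z a) (hzb : Commute z b)
    (hab : b * a = z ^ k * a * b) :
    (Subgroup.closure {a, b, z, r} : Set G) ⊆ normalForms r z a b := by
  intro g hg
  induction hg using Subgroup.closure_induction_left with
  | one => exact ⟨0, 0, 0, 0, zero_le_one, by simp⟩
  | mul_left x hx y _ hy =>
    rcases hx with rfl | rfl | rfl | rfl
    · simpa using zpow_mul_mem_normalForms_of_inverts hra hza 1 hy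
    · simpa using zpow_mul_mem_normalForms_of_commutator hrb hza hzb hab 1 hy
    · simpa using zpow_mul_mem_normalForms_of_commute hzr 1 hy
    · exact mul_mem_normalForms hr hy
  | inv_mul_cancel x hx y _ hy =>
    rcases hx with rfl | rfl | rfl | rfl
    · simpa using zpow_mul_mem_normalForms_of_inverts hra hza (-1) hy
    · simpa using zpow_mul_mem_normalForms_of_commutator hrb hza hzb hab (-1) hy
    · simpa using zpow_mul_mem_normalForms_of_commute hzr (-1) hy
    · rw [inv_eq_of_mul_eq_one_right hr]
      exact mul_mem_normalForms hr hy

end NormalForm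

section HeisenbergMatrices

variable {α : Type*} [CommRing α]

def heisenbergMatrix (x y w : α) : Matrix (Fin 3) (Fin 3) α :=
  !![1, x, w; 0, 1, y; 0, 0, 1]

def heisenbergRotationMatrix : Matrix (Fin 3) (Fin 3) α :=
  !![1, 0, 0; 0, -1, 0; 0, 0, 1]

theorem heisenbergMatrix_mul (x y w x' y' w' : α) :
    heisenbergMatrix x y w * heisenbergMatrix x' y' w' =
      heisenbergMatrix (x + x') (y + y') (w + w' + x * y') := by
  ext i j
  fin_cases i <;> fin_cases j <;> simp [heisenbergMatrix] <;> ring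

theorem heisenbergMatrix_zero : heisenbergMatrix (0 : α) 0 0 = 1 := by
  ext i j
  fin_cases i <;> fin_cases j <;> simp [heisenbergMatrix]

theorem heisenbergRotationMatrix_mul_self :
    heisenbergRotationMatrix * heisenbergRotationMatrix = (1 : Matrix (Fin 3) (Fin 3) α) := by
  ext i j
  fin_cases i <;> fin_cases j <;> simp [heisenbergRotationMatrix]

theorem heisenbergRotationMatrix_mul_heisenbergMatrix (x y w : α) :
    heisenbergRotationMatrix * heisenbergMatrix x y w =
      heisenbergMatrix (-x) (-y) w * heisenbergRotationMatrix := by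
  ext i j
  fin_cases i <;> fin_cases j <;> simp [heisenbergMatrix, heisenbergRotationMatrix]

theorem heisenbergMatrix_mul_heisenbergRotationMatrix_mul_self {x y w : α} (h : 2 * w = x * y) :
    heisenbergMatrix x y w * heisenbergRotationMatrix * heisenbergMatrix x y w =
      heisenbergRotationMatrix := by
  rw [mul_assoc, heisenbergRotationMatrix_mul_heisenbergMatrix, ← mul_assoc, heisenbergMatrix_mul,
    add_neg_cancel, add_neg_cancel, show w + w + x * -y = 0 by linear_combination h,
    heisenbergMatrix_zero, one_mul]

theorem heisenbergMatrix_pow_center (t : α) (n : ℕ) :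
    heisenbergMatrix 0 0 t ^ n = heisenbergMatrix 0 0 (n * t) := by
  induction n with
  | zero => simp [heisenbergMatrix_zero]
  | succ n ih => rw [pow_succ, ih, heisenbergMatrix_mul]; push_cast; ring_nf

end HeisenbergMatrices

theorem normal_form_cusp_stabilizer_d2
    (T₂ Ti Tv R : GL (Fin 3) ℂ)
    (hT₂ : (T₂ : Matrix (Fin 3) (Fin 3) ℂ) = !![1, -2, -2; 0, 1, 2; 0, 0, 1])
    (hTi : (Ti : Matrix (Fin 3) (Fin 3) ℂ) =
      !![1, Complex.I * (Real.sqrt 2 : ℂ), -1;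
         0, 1, Complex.I * (Real.sqrt 2 : ℂ);
         0, 0, 1])
    (hTv : (Tv : Matrix (Fin 3) (Fin 3) ℂ) =
      !![1, 0, Complex.I * (Real.sqrt 2 : ℂ); 0, 1, 0; 0, 0, 1])
    (hR : (R : Matrix (Fin 3) (Fin 3) ℂ) = !![1, 0, 0; 0, -1, 0; 0, 0, 1])
    (γ : GL (Fin 3) ℂ) (hγ : γ ∈ Subgroup.closure {T₂, Ti, Tv, R}) :
    ∃ (m n l : ℤ) (p : ℕ), p ≤ 1 ∧ γ = R ^ p * Tv ^ n * T₂ ^ m * Ti ^ l := by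
  set s : ℂ := Complex.I * (Real.sqrt 2 : ℂ)
  have hs : s * s = -2 := by
    rw [mul_mul_mul_comm, Complex.I_mul_I, ← Complex.ofReal_mul, Real.mul_self_sqrt zero_le_two]
    push_cast; ring
  replace hT₂ : (T₂ : Matrix (Fin 3) (Fin 3) ℂ) = heisenbergMatrix (-2) 2 (-2) := hT₂
  replace hTi : (Ti : Matrix (Fin 3) (Fin 3) ℂ) = heisenbergMatrix s s (-1) := hTi
  replace hTv : (Tv : Matrix (Fin 3) (Fin 3) ℂ) = heisenbergMatrix 0 0 s := hTv
  replace hR : (R : Matrix (Fin 3) (Fin 3) ℂ) = heisenbergRotationMatrix := hR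
  refine closure_subset_normalForms (k := 4) ?hr ?hra ?hrb ?hzr ?hza ?hzb ?hab hγ
  case hr => exact Units.ext <| by simp [hR, heisenbergRotationMatrix_mul_self]
  case hra =>
    rw [eq_inv_mul_iff_mul_eq]
    exact Units.ext <| by
      simpa [hR, hT₂, ← mul_assoc] using
        heisenbergMatrix_mul_heisenbergRotationMatrix_mul_self (by norm_num : (2 : ℂ) * -2 = -2 * 2)
  case hrb =>
    rw [eq_inv_mul_iff_mul_eq]
    exact Units.ext <| by
      simpa [hR, hTi, ← mul_assoc] using
        heisenbergMatrix_mul_heisenbergRotationMatrix_mul_self (by rw [hs]; norm_num : 2 * -1 = s * s)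
  case hzr => exact Units.ext <| by simp [hR, hTv, heisenbergRotationMatrix_mul_heisenbergMatrix]
  case hza => exact Units.ext <| by simp [hT₂, hTv, heisenbergMatrix_mul, add_comm]
  case hzb => exact Units.ext <| by simp [hTi, hTv, heisenbergMatrix_mul, add_comm]
  case hab =>
    rw [zpow_ofNat]
    exact Units.ext <| by
      simp only [Units.val_mul, Units.val_pow_eq_pow_val, hTi, hT₂, hTv,
        heisenbergMatrix_pow_center, heisenbergMatrix_mul]
      congr 1 <;> push_cast <;> ring
end

section
/- Let u = 0.4852. For every point (z,v) in the affine convex hull in ℂ×ℝ ≅ ℝ³ of the six points (0,0), (2,0), (i√2,0), (0,2√2), (2,2√2), (i√2,2√2), the point (z,v,u) lies in at least one of the following eight extended Cygan balls: the balls of radius √2 centered at (0,0), (2,0), (i√2,0), (0,2√2), (2,2√2), (i√2,2√2), and the balls of radius (4/3)^{1/4} centered at (2/3 + (1/3)i√2, (2/3)√2) and at (4/3 + (1/3)i√2, 2√2). -/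
/-- The extended Cygan distance from the point with horospherical coordinates
`(z,v,u)` to the boundary point `(c,w)`. -/
noncomputable def xcDist (z : ℂ) (v u : ℝ) (c : ℂ) (w : ℝ) : ℝ :=
  (((‖z - c‖) ^ 2 + u) ^ 2
    + (v - w + 2 * (z * (starRingEnd ℂ) c).im) ^ 2) ^ ((1 : ℝ) / 4)

noncomputable def sqrt2 : ℝ := Real.sqrt 2

noncomputable def is2 : ℂ := Complex.I * (Real.sqrt 2 : ℂ)

/-!
Write `z = x + i√2·b` and `v = √2·c`. In these coordinates the prism becomes
`0 ≤ x, 0 ≤ b, x + 2b ≤ 2, 0 ≤ c ≤ 2`, and the fourth power of the extended Cygan distance to a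
centre `(a + i√2·β, √2·ω)` becomes the polynomial `cyganQuartic`, free of `√2`. All eight centres
have `a, β, ω ∈ ⅓ℕ`, so each ball becomes a polynomial inequality with rational coefficients.
The covering is then checked by interval arithmetic in exact integers: the rescaled prism is
bisected, cycling through the three coordinates, until each box either misses the prism or
lies, by crude bounds, inside one of the balls; the kernel runs this search to completion.
-/

lemma sqrt2_pos : 0 < sqrt2 := Real.sqrt_pos.mpr two_pos

lemma sqrt2_sq : sqrt2 ^ 2 = 2 := Real.sq_sqrt zero_le_two

lemma sqrt2_pow_four : sqrt2 ^ 4 = 4 := by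
  rw [show 4 = 2 * 2 from rfl, pow_mul, sqrt2_sq]
  norm_num

lemma is2_re : is2.re = 0 := by simp [is2]

lemma is2_im : is2.im = sqrt2 := by simp [is2, sqrt2]

lemma rpow_one_div_four_pow_four {r : ℝ} (hr : 0 ≤ r) : (r ^ (1 / 4 : ℝ)) ^ 4 = r := by
  rw [← Real.rpow_natCast, ← Real.rpow_mul hr]
  norm_num

def cyganQuartic (u a β ω x b c : ℝ) : ℝ :=
  ((x - a) ^ 2 + 2 * (b - β) ^ 2 + u) ^ 2 + 2 * (c - ω + 2 * a * b - 2 * β * x) ^ 2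

lemma cyganQuartic_nonneg (u a β ω x b c : ℝ) : 0 ≤ cyganQuartic u a β ω x b c := by
  unfold cyganQuartic
  positivity

lemma xcDist_eq_cyganQuartic_rpow (z : ℂ) (v u : ℝ) (c : ℂ) (w : ℝ) :
    xcDist z v u c w = cyganQuartic u c.re (c.im / sqrt2) (w / sqrt2) z.re (z.im / sqrt2)
      (v / sqrt2) ^ (1 / 4 : ℝ) := by
  have hscale (t : ℝ) : t = sqrt2 * (t / sqrt2) := (mul_div_cancel₀ t sqrt2_pos.ne').symm
  set b := z.im / sqrt2
  set β := c.im / sqrt2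
  set ω := w / sqrt2
  set y := v / sqrt2
  have horiz : ‖z - c‖ ^ 2 = (z.re - c.re) ^ 2 + 2 * (b - β) ^ 2 := by
    rw [Complex.sq_norm, Complex.normSq_apply, Complex.sub_re, Complex.sub_im, hscale z.im,
      hscale c.im]
    linear_combination (b - β) ^ 2 * sqrt2_sq
  have vert : (v - w + 2 * (z * (starRingEnd ℂ) c).im) ^ 2 =
      2 * (y - ω + 2 * c.re * b - 2 * β * z.re) ^ 2 := by
    rw [Complex.mul_im, Complex.conj_re, Complex.conj_im, hscale z.im, hscale c.im, hscale v,
      hscale w]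
    linear_combination (y - ω + 2 * c.re * b - 2 * β * z.re) ^ 2 * sqrt2_sq
  rw [xcDist, horiz, vert, cyganQuartic]

lemma xcDist_lt_iff {r : ℝ} (hr : 0 ≤ r) (z : ℂ) (v u : ℝ) (c : ℂ) (w : ℝ) :
    xcDist z v u c w < r ↔
      cyganQuartic u c.re (c.im / sqrt2) (w / sqrt2) z.re (z.im / sqrt2) (v / sqrt2) < r ^ 4 := by
  rw [xcDist_eq_cyganQuartic_rpow, one_div,
    Real.rpow_inv_lt_iff_of_pos (cyganQuartic_nonneg ..) hr four_pos]
  norm_cast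

lemma rescaled_bounds_of_mem_convexHull {p : ℂ × ℝ}
    (hp : p ∈ convexHull ℝ ({((0 : ℂ), (0 : ℝ)), (2, 0), (is2, 0),
        (0, 2 * sqrt2), (2, 2 * sqrt2), (is2, 2 * sqrt2)} : Set (ℂ × ℝ))) :
    0 ≤ p.1.re ∧ 0 ≤ p.1.im / sqrt2 ∧ p.1.re + 2 * (p.1.im / sqrt2) ≤ 2 ∧
      0 ≤ p.2 / sqrt2 ∧ p.2 / sqrt2 ≤ 2 := by
  have hs := sqrt2_pos
  have linear (α β γ : ℝ) : IsLinearMap ℝ fun q : ℂ × ℝ => α * q.1.re + β * q.1.im + γ * q.2 :=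
    ⟨fun q r => by
      simp only [Prod.fst_add, Prod.snd_add, Complex.add_re, Complex.add_im]
      ring,
     fun t q => by
      simp only [Prod.smul_fst, Prod.smul_snd, Complex.smul_re, Complex.smul_im, smul_eq_mul]
      ring⟩
  have bound (α β γ k : ℝ) (h₀ : 0 ≤ k) (h₁ : α * 2 ≤ k) (h₂ : β * sqrt2 ≤ k)
      (h₃ : γ * (2 * sqrt2) ≤ k) (h₄ : α * 2 + γ * (2 * sqrt2) ≤ k)
      (h₅ : β * sqrt2 + γ * (2 * sqrt2) ≤ k) :
      α * p.1.re + β * p.1.im + γ * p.2 ≤ k := by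
    refine convexHull_min ?_ (convex_halfSpace_le (linear α β γ) k) hp
    simp only [Set.insert_subset_iff, Set.singleton_subset_iff, Set.mem_ofPred_eq, is2_re, is2_im,
      Complex.zero_re, Complex.zero_im, Complex.re_ofNat, Complex.im_ofNat]
    refine ⟨?_, ?_, ?_, ?_, ?_, ?_⟩ <;> linarith
  refine ⟨?_, ?_, ?_, ?_, ?_⟩
  · linarith [bound (-1) 0 0 0 le_rfl (by norm_num) (by norm_num) (by norm_num) (by norm_num)
      (by norm_num)]
  · have := bound 0 (-1) 0 0 le_rfl (by norm_num) (by linarith) (by norm_num) (by norm_num)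
      (by linarith)
    exact div_nonneg (by linarith) hs.le
  · have := bound 1 (2 / sqrt2) 0 2 zero_le_two (by norm_num) (div_mul_cancel₀ _ hs.ne').le
      (by norm_num) (by norm_num) (by rw [div_mul_cancel₀ _ hs.ne']; norm_num)
    linarith [show 2 * (p.1.im / sqrt2) = 2 / sqrt2 * p.1.im by ring]
  · have := bound 0 0 (-1) 0 le_rfl (by norm_num) (by norm_num) (by linarith) (by linarith)
      (by linarith)
    exact div_nonneg (by linarith) hs.le
  · have := bound 0 0 1 (2 * sqrt2) (by linarith) (by linarith) (by linarith) (by linarith)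
      (by linarith) (by linarith)
    rw [div_le_iff₀ hs]
    linarith

namespace CyganCover

structure Box where
  x : ℤ × ℤ
  b : ℤ × ℤ
  c : ℤ × ℤ

def Box.Mem (N : ℤ) (B : Box) (x b c : ℝ) : Prop :=
  N * x ∈ Set.Icc (B.x.1 : ℝ) B.x.2 ∧ N * b ∈ Set.Icc (B.b.1 : ℝ) B.b.2 ∧
    N * c ∈ Set.Icc (B.c.1 : ℝ) B.c.2

def bisect (I : ℤ × ℤ) : (ℤ × ℤ) × (ℤ × ℤ) :=
  ((I.1, (I.1 + I.2) / 2), ((I.1 + I.2) / 2, I.2))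

lemma mem_bisect {I : ℤ × ℤ} {t : ℝ} (h : t ∈ Set.Icc (I.1 : ℝ) I.2) :
    t ∈ Set.Icc ((bisect I).1.1 : ℝ) (bisect I).1.2 ∨
      t ∈ Set.Icc ((bisect I).2.1 : ℝ) (bisect I).2.2 := by
  rcases le_total t ((I.1 + I.2) / 2 : ℤ) with hm | hm
  · exact Or.inl ⟨h.1, hm⟩
  · exact Or.inr ⟨hm, h.2⟩

def Box.halve (B : Box) : ℕ → Box × Box
  | 0 => (⟨(bisect B.x).1, B.b, B.c⟩, ⟨(bisect B.x).2, B.b, B.c⟩)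
  | 1 => (⟨B.x, (bisect B.b).1, B.c⟩, ⟨B.x, (bisect B.b).2, B.c⟩)
  | _ => (⟨B.x, B.b, (bisect B.c).1⟩, ⟨B.x, B.b, (bisect B.c).2⟩)

lemma Box.Mem.halve {N : ℤ} {B : Box} {x b c : ℝ} (k : ℕ) (h : B.Mem N x b c) :
    (B.halve k).1.Mem N x b c ∨ (B.halve k).2.Mem N x b c := by
  obtain ⟨hx, hb, hc⟩ := h
  rcases k with _ | _ | k
  · rcases mem_bisect hx with h | h <;> simp [Box.halve, Box.Mem, *]
  · rcases mem_bisect hb with h | h <;> simp [Box.halve, Box.Mem, *]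
  · rcases mem_bisect hc with h | h <;> simp [Box.halve, Box.Mem, *]

def bisectCover (good : Box → Bool) : ℕ → ℕ → Box → Bool
  | 0, _, B => good B
  | n + 1, k, B => good B ||
      (bisectCover good n ((k + 1) % 3) (B.halve k).1 &&
        bisectCover good n ((k + 1) % 3) (B.halve k).2)

lemma Box.Mem.of_bisectCover {good : Box → Bool} {N : ℤ} {P : ℝ → ℝ → ℝ → Prop}
    (hgood : ∀ B, good B = true → ∀ x b c, B.Mem N x b c → P x b c) {n k : ℕ} {B : Box}
    (h : bisectCover good n k B = true) {x b c : ℝ} (hp : B.Mem N x b c) : P x b c := by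
  induction n generalizing k B with
  | zero => exact hgood B h x b c hp
  | succ n ih =>
    rw [bisectCover, Bool.or_eq_true, Bool.and_eq_true] at h
    rcases h with h | ⟨h₁, h₂⟩
    · exact hgood B h x b c hp
    · rcases hp.halve k with hp | hp
      exacts [ih h₁ hp, ih h₂ hp]

/-- The ball `cyganQuartic u (a/3) (β/3) (ω/3) x b c < r/3`. Since `a, β ≥ 0`, the linear term
is monotone in each coordinate, which `vertLower` and `vertUpper` use. -/
structure Ball where
  a : ℕ
  β : ℕ
  ω : ℕ
  r : ℕ

def Ball.horizBound (N : ℤ) (B : Ball) (box : Box) : ℤ :=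
  max ((3 * box.x.1 - N * B.a) ^ 2) ((3 * box.x.2 - N * B.a) ^ 2) +
    2 * max ((3 * box.b.1 - N * B.β) ^ 2) ((3 * box.b.2 - N * B.β) ^ 2)

def Ball.vertLower (N : ℤ) (B : Ball) (box : Box) : ℤ :=
  3 * box.c.1 - N * B.ω + 2 * B.a * box.b.1 - 2 * B.β * box.x.2

def Ball.vertUpper (N : ℤ) (B : Ball) (box : Box) : ℤ :=
  3 * box.c.2 - N * B.ω + 2 * B.a * box.b.2 - 2 * B.β * box.x.1

/-- `U` stands for `9 N² u`; the inequality is `cyganQuartic_scaled` with every term bounded. -/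
def Ball.checkBox (N U : ℤ) (B : Ball) (box : Box) : Bool :=
  decide (3 * (B.horizBound N box + U) ^ 2 +
    54 * N ^ 2 * max (B.vertLower N box ^ 2) (B.vertUpper N box ^ 2) < 81 * N ^ 4 * B.r)

def prismGood (N U : ℤ) (balls : List Ball) (box : Box) : Bool :=
  decide (2 * N < box.x.1 + 2 * box.b.1) || balls.any (·.checkBox N U box)

lemma sq_le_max_sq {l t r : ℝ} (hl : l ≤ t) (hr : t ≤ r) : t ^ 2 ≤ max (l ^ 2) (r ^ 2) := by
  rcases le_total t 0 with h | h
  · exact le_max_of_le_left (by nlinarith)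
  · exact le_max_of_le_right (by nlinarith)

lemma cyganQuartic_scaled (N u a β ω x b c : ℝ) :
    243 * N ^ 4 * cyganQuartic u (a / 3) (β / 3) (ω / 3) x b c =
      3 * ((3 * (N * x) - N * a) ^ 2 + 2 * (3 * (N * b) - N * β) ^ 2 + 9 * N ^ 2 * u) ^ 2 +
        54 * N ^ 2 * (3 * (N * c) - N * ω + 2 * a * (N * b) - 2 * β * (N * x)) ^ 2 := by
  unfold cyganQuartic
  ring

section Soundness

variable {N : ℤ} {B : Ball} {box : Box} {x b c : ℝ}

lemma Ball.le_horizBound (hp : box.Mem N x b c) :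
    (3 * (N * x) - N * B.a) ^ 2 + 2 * (3 * (N * b) - N * B.β) ^ 2 ≤ (B.horizBound N box : ℝ) := by
  obtain ⟨⟨hx₀, hx₁⟩, ⟨hb₀, hb₁⟩, -⟩ := hp
  push_cast [Ball.horizBound]
  gcongr <;> apply sq_le_max_sq <;> linarith

lemma Ball.vertLower_le (hp : box.Mem N x b c) :
    (B.vertLower N box : ℝ) ≤ 3 * (N * c) - N * B.ω + 2 * B.a * (N * b) - 2 * B.β * (N * x) := by
  obtain ⟨⟨-, hx₁⟩, ⟨hb₀, -⟩, ⟨hc₀, -⟩⟩ := hp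
  push_cast [Ball.vertLower]
  have := B.a.cast_nonneg (α := ℝ)
  have := B.β.cast_nonneg (α := ℝ)
  nlinarith

lemma Ball.le_vertUpper (hp : box.Mem N x b c) :
    3 * (N * c) - N * B.ω + 2 * B.a * (N * b) - 2 * B.β * (N * x) ≤ (B.vertUpper N box : ℝ) := by
  obtain ⟨⟨hx₀, -⟩, ⟨-, hb₁⟩, ⟨-, hc₁⟩⟩ := hp
  push_cast [Ball.vertUpper]
  have := B.a.cast_nonneg (α := ℝ)
  have := B.β.cast_nonneg (α := ℝ)
  nlinarith

lemma Ball.cyganQuartic_lt_of_checkBox {U : ℤ} {u : ℝ} (hu : 0 ≤ u) (hN : 0 < N)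
    (hU : (U : ℝ) = 9 * N ^ 2 * u) (h : B.checkBox N U box = true) (hp : box.Mem N x b c) :
    cyganQuartic u (B.a / 3) (B.β / 3) (B.ω / 3) x b c < B.r / 3 := by
  have hcheck := (Int.cast_lt (R := ℝ)).mpr (of_decide_eq_true h)
  push_cast at hcheck
  have hN' : (0 : ℝ) < N := by exact_mod_cast hN
  have hvert := sq_le_max_sq (B.vertLower_le hp) (B.le_vertUpper hp)
  have hhoriz : ((3 * (N * x) - N * B.a) ^ 2 + 2 * (3 * (N * b) - N * B.β) ^ 2 +
      9 * N ^ 2 * u) ^ 2 ≤ (B.horizBound N box + U : ℝ) ^ 2 := by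
    have := B.le_horizBound hp
    gcongr
    exact hU.ge
  have hscaled : 243 * N ^ 4 * cyganQuartic u (B.a / 3) (B.β / 3) (B.ω / 3) x b c <
      243 * N ^ 4 * (B.r / 3 : ℝ) := by
    rw [cyganQuartic_scaled]
    nlinarith
  exact lt_of_mul_lt_mul_left hscaled (by positivity)

lemma exists_cyganQuartic_lt_of_prismGood {U : ℤ} {u : ℝ} (hu : 0 ≤ u) (hN : 0 < N)
    (hU : (U : ℝ) = 9 * N ^ 2 * u) {balls : List Ball} (h : prismGood N U balls box = true)
    (hp : box.Mem N x b c) (hxb : x + 2 * b ≤ 2) :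
    ∃ B ∈ balls, cyganQuartic u (B.a / 3) (B.β / 3) (B.ω / 3) x b c < B.r / 3 := by
  rw [prismGood, Bool.or_eq_true, decide_eq_true_eq, List.any_eq_true] at h
  rcases h with h | ⟨B, hB, hcheck⟩
  · have hmiss : ((2 * N : ℤ) : ℝ) < (box.x.1 + 2 * box.b.1 : ℤ) := by exact_mod_cast h
    push_cast at hmiss
    have hN' : (0 : ℝ) < N := by exact_mod_cast hN
    nlinarith [hp.1.1, hp.2.1.1]
  · exact ⟨B, hB, B.cyganQuartic_lt_of_checkBox hu hN hU hcheck hp⟩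

end Soundness

def coverBalls : List Ball :=
  [⟨0, 0, 0, 12⟩, ⟨6, 0, 0, 12⟩, ⟨0, 3, 0, 12⟩, ⟨0, 0, 6, 12⟩, ⟨6, 0, 6, 12⟩, ⟨0, 3, 6, 12⟩,
    ⟨2, 1, 2, 4⟩, ⟨4, 1, 6, 4⟩]

/-- At scale `N = 200`, `9 N² · 0.4852 = 174672`; 22 levels of bisection suffice. -/
lemma bisectCover_prismGood :
    bisectCover (prismGood 200 174672 coverBalls) 22 0 ⟨(0, 400), (0, 200), (0, 400)⟩ = true := by
  decide +kernel

lemma exists_cyganQuartic_lt_of_mem_prism {x b c : ℝ} (hx : 0 ≤ x) (hb : 0 ≤ b)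
    (hxb : x + 2 * b ≤ 2) (hc₀ : 0 ≤ c) (hc₂ : c ≤ 2) :
    ∃ B ∈ coverBalls, cyganQuartic (1213 / 2500) (B.a / 3) (B.β / 3) (B.ω / 3) x b c < B.r / 3 := by
  have hbox : Box.Mem 200 ⟨(0, 400), (0, 200), (0, 400)⟩ x b c := by
    refine ⟨⟨?_, ?_⟩, ⟨?_, ?_⟩, ⟨?_, ?_⟩⟩ <;> push_cast <;> linarith
  exact Box.Mem.of_bisectCover (P := fun x b c => x + 2 * b ≤ 2 → ∃ B ∈ coverBalls,
      cyganQuartic (1213 / 2500) (B.a / 3) (B.β / 3) (B.ω / 3) x b c < B.r / 3)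
    (fun _ h _ _ _ hp => exists_cyganQuartic_lt_of_prismGood (by norm_num) (by norm_num)
      (by norm_num) h hp)
    bisectCover_prismGood hbox hxb

end CyganCover

theorem covering_of_prism_d2 :
    ∀ p ∈ convexHull ℝ ({((0 : ℂ), (0 : ℝ)), (2, 0), (is2, 0),
        (0, 2 * sqrt2), (2, 2 * sqrt2), (is2, 2 * sqrt2)} : Set (ℂ × ℝ)),
      xcDist p.1 p.2 0.4852 0 0 < sqrt2 ∨
      xcDist p.1 p.2 0.4852 2 0 < sqrt2 ∨
      xcDist p.1 p.2 0.4852 is2 0 < sqrt2 ∨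
      xcDist p.1 p.2 0.4852 0 (2 * sqrt2) < sqrt2 ∨
      xcDist p.1 p.2 0.4852 2 (2 * sqrt2) < sqrt2 ∨
      xcDist p.1 p.2 0.4852 is2 (2 * sqrt2) < sqrt2 ∨
      xcDist p.1 p.2 0.4852 (2/3 + (1/3) * is2) ((2/3) * sqrt2) < (4/3 : ℝ) ^ ((1:ℝ)/4) ∨
      xcDist p.1 p.2 0.4852 (4/3 + (1/3) * is2) (2 * sqrt2) < (4/3 : ℝ) ^ ((1:ℝ)/4) := by
  intro p hp
  obtain ⟨hx, hb, hxb, hc₀, hc₂⟩ := rescaled_bounds_of_mem_convexHull hp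
  have hcover := CyganCover.exists_cyganQuartic_lt_of_mem_prism hx hb hxb hc₀ hc₂
  norm_num [CyganCover.coverBalls] at hcover
  have h43 : (0 : ℝ) ≤ 4 / 3 := by norm_num
  simp only [xcDist_lt_iff sqrt2_pos.le, xcDist_lt_iff (Real.rpow_nonneg h43 _), sqrt2_pow_four,
    rpow_one_div_four_pow_four h43]
  norm_num [is2_re, is2_im, sqrt2_pos.ne']
  exact hcover
end
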